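/- arXiv:1609.05779 — 4 statements merged into one kernel-verified Lean document; each statement's English description precedes it below -/
import Mathlib

section
/- Let V be a finite set of nodes, and for each edge (u,v,σ) of a finite labeled directed graph Θ let A_σ : ℝⁿ → ℝⁿ, B_σ : ℝᵈ → ℝⁿ, C_σ : ℝⁿ → ℝᵐ, D_σ : ℝᵈ → ℝᵐ be linear maps. Suppose there is a family of norms (|·|_v)_{v∈V} on ℝⁿ and γ ≥ 0 such that for every edge (u,v,σ), every x ∈ ℝⁿ and every w ∈ ℝᵈ, |A_σ x + B_σ w|_v^p + ‖C_σ x + D_σ w‖_p^p ≤ |x|_u^p + γ^p ‖w‖_p^p. Then for every infinite path π in Θ, every disturbance sequence w : ℕ → ℝᵈ with Σ_t ‖w_t‖_p^p < ∞, and the trajectory x_0 = 0, x_{t+1} = A_{σ(t)} x_t + B_{σ(t)} w_t, z_t = C_{σ(t)} x_t + D_{σ(t)} w_t, one has Σ_t ‖z_t‖_p^p ≤ γ^p · Σ_t ‖w_t‖_p^p. -/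
/-- multinorm dissipation inequality implies the L_p-gain bound
along every infinite admissible path. -/
theorem stmt0 {V Λ : Type*} {n d m : ℕ}
    (E : Set (V × V × Λ))
    (A : Λ → Matrix (Fin n) (Fin n) ℝ)
    (B : Λ → Matrix (Fin n) (Fin d) ℝ)
    (C : Λ → Matrix (Fin m) (Fin n) ℝ)
    (D : Λ → Matrix (Fin m) (Fin d) ℝ)
    (p : ℝ) (hp : 1 ≤ p)
    (N : V → (Fin n → ℝ) → ℝ)
    (hN0 : ∀ v, N v 0 = 0)
    (hNnonneg : ∀ v x, 0 ≤ N v x)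
    (γ : ℝ) (hγ : 0 ≤ γ)
    (hdiss : ∀ u v σ, (u, v, σ) ∈ E → ∀ (x : Fin n → ℝ) (w : Fin d → ℝ),
      (N v ((A σ).mulVec x + (B σ).mulVec w)) ^ p
        + ∑ i, |((C σ).mulVec x + (D σ).mulVec w) i| ^ p
      ≤ (N u x) ^ p + γ ^ p * ∑ i, |w i| ^ p)
    (vseq : ℕ → V) (σseq : ℕ → Λ)
    (hpath : ∀ t, (vseq t, vseq (t + 1), σseq t) ∈ E)
    (w : ℕ → Fin d → ℝ)
    (hw : Summable fun t => ∑ i, |w t i| ^ p)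
    (x : ℕ → Fin n → ℝ) (z : ℕ → Fin m → ℝ)
    (hx0 : x 0 = 0)
    (hx : ∀ t, x (t + 1) = (A (σseq t)).mulVec (x t) + (B (σseq t)).mulVec (w t))
    (hz : ∀ t, z t = (C (σseq t)).mulVec (x t) + (D (σseq t)).mulVec (w t)) :
    ∑' t, (∑ i, |z t i| ^ p) ≤ γ ^ p * ∑' t, (∑ i, |w t i| ^ p) := by
  have hp0 : p ≠ 0 := by linarith
  have hznn : ∀ t, 0 ≤ ∑ i, |z t i| ^ p := fun t =>
    Finset.sum_nonneg fun i _ => Real.rpow_nonneg (abs_nonneg _) p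
  have hwnn : ∀ t, 0 ≤ ∑ i, |w t i| ^ p := fun t =>
    Finset.sum_nonneg fun i _ => Real.rpow_nonneg (abs_nonneg _) p
  -- telescoping key inequality
  have key : ∀ T, (∑ t ∈ Finset.range T, ∑ i, |z t i| ^ p) + (N (vseq T) (x T)) ^ p
      ≤ γ ^ p * ∑ t ∈ Finset.range T, ∑ i, |w t i| ^ p := by
    intro T
    induction T with
    | zero =>
      simp [hx0, hN0, Real.zero_rpow hp0]
    | succ T ih =>
      have hd := hdiss _ _ _ (hpath T) (x T) (w T)
      rw [← hx T, ← hz T] at hd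
      rw [Finset.sum_range_succ, Finset.sum_range_succ]
      have := add_le_add ih hd
      linarith
  -- bound partial sums of z-cost
  have hbound : ∀ T, (∑ t ∈ Finset.range T, ∑ i, |z t i| ^ p)
      ≤ γ ^ p * ∑' t, ∑ i, |w t i| ^ p := by
    intro T
    have h1 : (∑ t ∈ Finset.range T, ∑ i, |z t i| ^ p)
        ≤ γ ^ p * ∑ t ∈ Finset.range T, ∑ i, |w t i| ^ p := by
      have := key T
      have hN := hNnonneg (vseq T) (x T)
      have : (0:ℝ) ≤ (N (vseq T) (x T)) ^ p := Real.rpow_nonneg hN p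
      linarith [key T]
    refine h1.trans ?_
    refine mul_le_mul_of_nonneg_left ?_ (Real.rpow_nonneg hγ p)
    exact Summable.sum_le_tsum _ (fun t _ => hwnn t) hw
  exact Real.tsum_le_of_sum_range_le (fun t => hznn t) hbound
end

section
/- Suppose that for every node v the reachability subspace B_v = Σ_{π ends at v} Im(B_π) equals ℝⁿ, and that γ is at least the L_p-gain of the system (so F_u(0) = 0 for all u). Then F_v(x) < +∞ for every x ∈ ℝⁿ and every node v, where F_v(x) = sup over finite paths from v and inputs of Σ_t ‖z_t(x,w)‖_p^p − γ^p Σ_t ‖w_t‖_p^p. -/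
/-- The state of the switching system along the mode sequence `σseq`, driven by
inputs `w` from initial state `x0`. -/
def stSeq {Λ : Type*} {n d : ℕ} (A : Λ → Matrix (Fin n) (Fin n) ℝ)
    (B : Λ → Matrix (Fin n) (Fin d) ℝ)
    (σseq : ℕ → Λ) (w : ℕ → Fin d → ℝ) (x0 : Fin n → ℝ) : ℕ → Fin n → ℝ
  | 0 => x0
  | t + 1 => (A (σseq t)).mulVec (stSeq A B σseq w x0 t) + (B (σseq t)).mulVec (w t)

/-- The extremal storage function `F_{v,γ,p}`: the supremum, over all finite
admissible paths starting at node `v` and all input sequences, of the output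
`p`-cost minus `γ^p` times the input `p`-cost, as an extended real. -/
noncomputable def Fv {V Λ : Type*} {n d m : ℕ} (E : Set (V × V × Λ))
    (A : Λ → Matrix (Fin n) (Fin n) ℝ) (B : Λ → Matrix (Fin n) (Fin d) ℝ)
    (C : Λ → Matrix (Fin m) (Fin n) ℝ) (D : Λ → Matrix (Fin m) (Fin d) ℝ)
    (p γ : ℝ) (v : V) (x : Fin n → ℝ) : EReal :=
  ⨆ (T : ℕ) (vseq : ℕ → V) (σseq : ℕ → Λ) (w : ℕ → Fin d → ℝ)
    (_ : vseq 0 = v) (_ : ∀ t < T, (vseq t, vseq (t + 1), σseq t) ∈ E),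
    (((∑ t ∈ Finset.range T, ∑ i,
        |((C (σseq t)).mulVec (stSeq A B σseq w x t) + (D (σseq t)).mulVec (w t)) i| ^ p)
      - γ ^ p * ∑ t ∈ Finset.range T, ∑ i, |w t i| ^ p : ℝ) : EReal)

section
variable {Λ : Type*} {n d : ℕ} (A : Λ → Matrix (Fin n) (Fin n) ℝ)
    (B : Λ → Matrix (Fin n) (Fin d) ℝ)

theorem stSeq_congr' (σ σ' : ℕ → Λ) (w w' : ℕ → Fin d → ℝ) (x : Fin n → ℝ) :
    ∀ T, (∀ t < T, σ t = σ' t) → (∀ t < T, w t = w' t) →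
      stSeq A B σ w x T = stSeq A B σ' w' x T
  | 0, _, _ => rfl
  | T + 1, hσ, hw => by
    simp only [stSeq]
    rw [stSeq_congr' σ σ' w w' x T (fun t ht => hσ t (by omega)) (fun t ht => hw t (by omega)),
      hσ T (by omega), hw T (by omega)]

theorem stSeq_shift' (σ : ℕ → Λ) (w : ℕ → Fin d → ℝ) (x : Fin n → ℝ) (T₀ : ℕ) :
    ∀ t, stSeq A B (fun s => σ (T₀ + s)) (fun s => w (T₀ + s)) (stSeq A B σ w x T₀) t
      = stSeq A B σ w x (T₀ + t)
  | 0 => rfl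
  | t + 1 => by
    show _ = stSeq A B σ w x (T₀ + t + 1)
    simp only [stSeq, stSeq_shift' σ w x T₀ t]

theorem stSeq_add' (σ : ℕ → Λ) (w₁ w₂ : ℕ → Fin d → ℝ) (x₁ x₂ : Fin n → ℝ) :
    ∀ t, stSeq A B σ (fun s => w₁ s + w₂ s) (x₁ + x₂) t
      = stSeq A B σ w₁ x₁ t + stSeq A B σ w₂ x₂ t
  | 0 => rfl
  | t + 1 => by
    simp only [stSeq, stSeq_add' σ w₁ w₂ x₁ x₂ t, Matrix.mulVec_add]
    abel

theorem stSeq_smul' (σ : ℕ → Λ) (w : ℕ → Fin d → ℝ) (x : Fin n → ℝ) (c : ℝ) :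
    ∀ t, stSeq A B σ (fun s => c • w s) (c • x) t = c • stSeq A B σ w x t
  | 0 => rfl
  | t + 1 => by
    simp only [stSeq, stSeq_smul' σ w x c t, Matrix.mulVec_smul, smul_add]

end

theorem abs_rpow_add_le' {p : ℝ} (hp : 1 ≤ p) (a b : ℝ) :
    |a + b| ^ p ≤ 2 ^ (p - 1) * (|a| ^ p + |b| ^ p) := by
  have h1 : |a + b| ^ p ≤ (|a| + |b|) ^ p :=
    Real.rpow_le_rpow (abs_nonneg _) (abs_add_le a b) (by linarith)
  refine h1.trans ?_
  have h := NNReal.rpow_add_le_mul_rpow_add_rpow ⟨|a|, abs_nonneg a⟩ ⟨|b|, abs_nonneg b⟩ hp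
  have h2 := NNReal.coe_le_coe.mpr h
  push_cast at h2
  convert h2 using 3
  all_goals rfl


/-- if every node is completely reachable (the span of the states
reachable from `0` along paths ending at `v` is everything) and `γ` dominates
the L_p-gain, then the extremal storage function is finite everywhere. -/
theorem stmt6 {V Λ : Type*} {n d m : ℕ} (E : Set (V × V × Λ))
    (A : Λ → Matrix (Fin n) (Fin n) ℝ) (B : Λ → Matrix (Fin n) (Fin d) ℝ)
    (C : Λ → Matrix (Fin m) (Fin n) ℝ) (D : Λ → Matrix (Fin m) (Fin d) ℝ)
    (p : ℝ) (hp : 1 ≤ p) (γ : ℝ) (hγ : 0 < γ)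
    (hreach : ∀ v : V,
      Submodule.span ℝ {x : Fin n → ℝ | ∃ (T : ℕ) (vseq : ℕ → V) (σseq : ℕ → Λ)
          (w : ℕ → Fin d → ℝ),
          (∀ t < T, (vseq t, vseq (t + 1), σseq t) ∈ E) ∧ vseq T = v ∧
          x = stSeq A B σseq w 0 T} = ⊤)
    (hgain : ∀ (T : ℕ) (vseq : ℕ → V) (σseq : ℕ → Λ) (w : ℕ → Fin d → ℝ),
      (∀ t < T, (vseq t, vseq (t + 1), σseq t) ∈ E) →
      ∑ t ∈ Finset.range T, ∑ i,
          |((C (σseq t)).mulVec (stSeq A B σseq w 0 t) + (D (σseq t)).mulVec (w t)) i| ^ p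
        ≤ γ ^ p * ∑ t ∈ Finset.range T, ∑ i, |w t i| ^ p) :
    ∀ (v : V) (x : Fin n → ℝ), Fv E A B C D p γ v x < ⊤ := by
  intro v x
  have hx : x ∈ Submodule.span ℝ {x : Fin n → ℝ | ∃ (T : ℕ) (vseq : ℕ → V) (σseq : ℕ → Λ)
      (w : ℕ → Fin d → ℝ),
      (∀ t < T, (vseq t, vseq (t + 1), σseq t) ∈ E) ∧ vseq T = v ∧
      x = stSeq A B σseq w 0 T} := by rw [hreach v]; exact Submodule.mem_top
  have key : ∃ M : ℝ, ∀ (T : ℕ) (vseq : ℕ → V) (σseq : ℕ → Λ) (w : ℕ → Fin d → ℝ),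
      vseq 0 = v → (∀ t < T, (vseq t, vseq (t + 1), σseq t) ∈ E) →
      (∑ t ∈ Finset.range T, ∑ i,
        |((C (σseq t)).mulVec (stSeq A B σseq w x t) + (D (σseq t)).mulVec (w t)) i| ^ p)
        - γ ^ p * ∑ t ∈ Finset.range T, ∑ i, |w t i| ^ p ≤ M := by
    induction hx using Submodule.span_induction with
    | mem y hy =>
      obtain ⟨T₀, vseq₀, σ₀, w₀, hpath₀, hend, hy0⟩ := hy
      refine ⟨γ ^ p * ∑ t ∈ Finset.range T₀, ∑ i, |w₀ t i| ^ p, ?_⟩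
      intro T vseq σseq w h0 hpath
      set σ' : ℕ → Λ := fun t => if t < T₀ then σ₀ t else σseq (t - T₀) with hσ'
      set w' : ℕ → Fin d → ℝ := fun t => if t < T₀ then w₀ t else w (t - T₀) with hw'
      set vseq' : ℕ → V := fun t => if t < T₀ then vseq₀ t else vseq (t - T₀) with hv'
      have hσa : ∀ t, t < T₀ → σ' t = σ₀ t := fun t ht => by rw [hσ']; exact if_pos ht
      have hwa : ∀ t, t < T₀ → w' t = w₀ t := fun t ht => by rw [hw']; exact if_pos ht
      have hσb : ∀ s, σ' (T₀ + s) = σseq s := fun s => by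
        rw [hσ', show (fun t => if t < T₀ then σ₀ t else σseq (t - T₀)) (T₀ + s)
          = if T₀ + s < T₀ then σ₀ (T₀ + s) else σseq (T₀ + s - T₀) from rfl,
          if_neg (by omega)]
        congr 1; omega
      have hwb : ∀ s, w' (T₀ + s) = w s := fun s => by
        rw [hw', show (fun t => if t < T₀ then w₀ t else w (t - T₀)) (T₀ + s)
          = if T₀ + s < T₀ then w₀ (T₀ + s) else w (T₀ + s - T₀) from rfl,
          if_neg (by omega)]
        exact congrArg w (by omega)
      have hinit : stSeq A B σ' w' 0 T₀ = y := by
        rw [stSeq_congr' A B σ' σ₀ w' w₀ 0 T₀ hσa hwa]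
        exact hy0.symm
      have hshift : ∀ t, stSeq A B σseq w y t = stSeq A B σ' w' 0 (T₀ + t) := by
        intro t
        rw [← stSeq_shift' A B σ' w' 0 T₀ t, hinit,
          show (fun s => σ' (T₀ + s)) = σseq from funext hσb,
          show (fun s => w' (T₀ + s)) = w from funext hwb]
      have hpath' : ∀ t < T₀ + T, (vseq' t, vseq' (t + 1), σ' t) ∈ E := by
        intro t ht
        by_cases h : t < T₀
        · have hv1 : vseq' (t + 1) = vseq₀ (t + 1) := by
            by_cases h2 : t + 1 < T₀
            · rw [hv']; exact if_pos h2
            · have ht1 : t + 1 = T₀ := by omega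
              rw [hv', show (fun s => if s < T₀ then vseq₀ s else vseq (s - T₀)) (t + 1)
                = if t + 1 < T₀ then vseq₀ (t + 1) else vseq (t + 1 - T₀) from rfl,
                if_neg h2, ht1, Nat.sub_self, h0, ← hend]
          have hv0 : vseq' t = vseq₀ t := by rw [hv']; exact if_pos h
          rw [hv0, hv1, hσa t h]
          exact hpath₀ t h
        · have e1 : vseq' t = vseq (t - T₀) := by rw [hv']; exact if_neg h
          have e2 : vseq' (t + 1) = vseq (t - T₀ + 1) := by
            rw [hv', show (fun s => if s < T₀ then vseq₀ s else vseq (s - T₀)) (t + 1)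
              = if t + 1 < T₀ then vseq₀ (t + 1) else vseq (t + 1 - T₀) from rfl,
              if_neg (by omega)]
            congr 1; omega
          have e3 : σ' t = σseq (t - T₀) := by rw [hσ']; exact if_neg h
          rw [e1, e2, e3]
          exact hpath (t - T₀) (by omega)
      have hg := hgain (T₀ + T) vseq' σ' w' hpath'
      rw [Finset.sum_range_add, Finset.sum_range_add] at hg
      have ef : ∑ s ∈ Finset.range T, (∑ i,
          |((C (σ' (T₀ + s))).mulVec (stSeq A B σ' w' 0 (T₀ + s))
            + (D (σ' (T₀ + s))).mulVec (w' (T₀ + s))) i| ^ p)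
          = ∑ s ∈ Finset.range T, ∑ i,
          |((C (σseq s)).mulVec (stSeq A B σseq w y s) + (D (σseq s)).mulVec (w s)) i| ^ p :=
        Finset.sum_congr rfl fun s _ => by rw [hσb s, hwb s, ← hshift s]
      have eg : ∑ s ∈ Finset.range T, (∑ i, |w' (T₀ + s) i| ^ p)
          = ∑ s ∈ Finset.range T, ∑ i, |w s i| ^ p :=
        Finset.sum_congr rfl fun s _ => by rw [hwb s]
      have eg0 : ∑ t ∈ Finset.range T₀, (∑ i, |w' t i| ^ p)
          = ∑ t ∈ Finset.range T₀, ∑ i, |w₀ t i| ^ p :=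
        Finset.sum_congr rfl fun t ht => by rw [hwa t (Finset.mem_range.mp ht)]
      rw [ef, eg, eg0, mul_add] at hg
      have hf0 : 0 ≤ ∑ t ∈ Finset.range T₀, ∑ i,
          |((C (σ' t)).mulVec (stSeq A B σ' w' 0 t) + (D (σ' t)).mulVec (w' t)) i| ^ p := by
        positivity
      linarith
    | zero =>
      exact ⟨0, fun T vseq σseq w h0 hpath => sub_nonpos.mpr (hgain T vseq σseq w hpath)⟩
    | add y z hy hz ihy ihz =>
      obtain ⟨My, hMy⟩ := ihy
      obtain ⟨Mz, hMz⟩ := ihz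
      refine ⟨2 ^ (p - 1) * (My + Mz), ?_⟩
      intro T vseq σseq w h0 hpath
      have h2 : (0:ℝ) < 2 ^ (p - 1) := Real.rpow_pos_of_pos two_pos _
      set w2 : ℕ → Fin d → ℝ := fun t => (2:ℝ)⁻¹ • w t with hw2
      have hyb := hMy T vseq σseq w2 h0 hpath
      have hzb := hMz T vseq σseq w2 h0 hpath
      have hww : (fun s => w2 s + w2 s) = w := by
        funext s i
        rw [hw2]
        show (2:ℝ)⁻¹ * w s i + (2:ℝ)⁻¹ * w s i = w s i
        ring
      have hst : ∀ t, stSeq A B σseq w (y + z) t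
          = stSeq A B σseq w2 y t + stSeq A B σseq w2 z t := by
        intro t
        rw [← hww, stSeq_add' A B σseq w2 w2 y z t]
      have hout : ∀ t, ((C (σseq t)).mulVec (stSeq A B σseq w (y + z) t)
            + (D (σseq t)).mulVec (w t))
          = ((C (σseq t)).mulVec (stSeq A B σseq w2 y t) + (D (σseq t)).mulVec (w2 t))
          + ((C (σseq t)).mulVec (stSeq A B σseq w2 z t) + (D (σseq t)).mulVec (w2 t)) := by
        intro t
        rw [hst t, Matrix.mulVec_add, show w t = w2 t + w2 t from by
          rw [← hww], Matrix.mulVec_add]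
        abel
      have hcost : ∑ t ∈ Finset.range T, ∑ i,
            |((C (σseq t)).mulVec (stSeq A B σseq w (y + z) t) + (D (σseq t)).mulVec (w t)) i| ^ p
          ≤ 2 ^ (p - 1) * ((∑ t ∈ Finset.range T, ∑ i,
              |((C (σseq t)).mulVec (stSeq A B σseq w2 y t) + (D (σseq t)).mulVec (w2 t)) i| ^ p)
            + ∑ t ∈ Finset.range T, ∑ i,
              |((C (σseq t)).mulVec (stSeq A B σseq w2 z t) + (D (σseq t)).mulVec (w2 t)) i| ^ p) := by
        calc ∑ t ∈ Finset.range T, ∑ i,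
            |((C (σseq t)).mulVec (stSeq A B σseq w (y + z) t) + (D (σseq t)).mulVec (w t)) i| ^ p
            ≤ ∑ t ∈ Finset.range T, ∑ i, 2 ^ (p - 1) *
              (|((C (σseq t)).mulVec (stSeq A B σseq w2 y t) + (D (σseq t)).mulVec (w2 t)) i| ^ p
              + |((C (σseq t)).mulVec (stSeq A B σseq w2 z t) + (D (σseq t)).mulVec (w2 t)) i| ^ p) := by
              refine Finset.sum_le_sum fun t _ => Finset.sum_le_sum fun i _ => ?_
              rw [hout t]
              exact abs_rpow_add_le' hp _ _
          _ = _ := by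
              simp only [Finset.mul_sum, Finset.sum_add_distrib, mul_add]
      have hin : ∑ t ∈ Finset.range T, ∑ i, |w t i| ^ p
          = 2 ^ (p - 1) * 2 * ∑ t ∈ Finset.range T, ∑ i, |w2 t i| ^ p := by
        rw [show (2:ℝ) ^ (p - 1) * 2 = 2 ^ p from by
          rw [show p = p - 1 + 1 from by ring, Real.rpow_add two_pos, Real.rpow_one]; ring_nf,
          Finset.mul_sum]
        refine Finset.sum_congr rfl fun t _ => ?_
        rw [Finset.mul_sum]
        refine Finset.sum_congr rfl fun i _ => ?_
        have e0 : w2 t i = (2:ℝ)⁻¹ * w t i := rfl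
        rw [show w t i = 2 * w2 t i from by rw [e0]; ring, abs_mul,
          Real.mul_rpow (abs_nonneg _) (abs_nonneg _), abs_two]
      have hmul := mul_le_mul_of_nonneg_left (add_le_add hyb hzb) h2.le
      rw [hin]
      nlinarith [hcost, hmul]
    | smul c y hy ihy =>
      obtain ⟨My, hMy⟩ := ihy
      refine ⟨|c| ^ p * My, ?_⟩
      intro T vseq σseq w h0 hpath
      by_cases hc : c = 0
      · subst hc
        rw [zero_smul, abs_zero, Real.zero_rpow (by positivity : p ≠ 0), zero_mul]
        exact sub_nonpos.mpr (hgain T vseq σseq w hpath)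
      · set w2 : ℕ → Fin d → ℝ := fun t => c⁻¹ • w t with hw2
        have hwc : ∀ t, w t = c • w2 t := by
          intro t; funext i
          show w t i = c * (c⁻¹ * w t i)
          field_simp
        have hst : ∀ t, stSeq A B σseq w (c • y) t = c • stSeq A B σseq w2 y t := by
          intro t
          rw [show w = fun s => c • w2 s from funext hwc]
          exact stSeq_smul' A B σseq w2 y c t
        have hout : ∀ t, ((C (σseq t)).mulVec (stSeq A B σseq w (c • y) t)
              + (D (σseq t)).mulVec (w t))
            = c • ((C (σseq t)).mulVec (stSeq A B σseq w2 y t)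
              + (D (σseq t)).mulVec (w2 t)) := by
          intro t
          rw [hst t, hwc t, Matrix.mulVec_smul, Matrix.mulVec_smul, smul_add]
        have hcpos : (0:ℝ) < |c| ^ p := Real.rpow_pos_of_pos (abs_pos.mpr hc) p
        have hcost : ∑ t ∈ Finset.range T, ∑ i,
              |((C (σseq t)).mulVec (stSeq A B σseq w (c • y) t)
                + (D (σseq t)).mulVec (w t)) i| ^ p
            = |c| ^ p * ∑ t ∈ Finset.range T, ∑ i,
              |((C (σseq t)).mulVec (stSeq A B σseq w2 y t)
                + (D (σseq t)).mulVec (w2 t)) i| ^ p := by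
          rw [Finset.mul_sum]
          refine Finset.sum_congr rfl fun t _ => ?_
          rw [Finset.mul_sum]
          refine Finset.sum_congr rfl fun i _ => ?_
          rw [hout t]
          show |c * _| ^ p = _
          rw [abs_mul, Real.mul_rpow (abs_nonneg _) (abs_nonneg _)]
        have hin : ∑ t ∈ Finset.range T, ∑ i, |w t i| ^ p
            = |c| ^ p * ∑ t ∈ Finset.range T, ∑ i, |w2 t i| ^ p := by
          rw [Finset.mul_sum]
          refine Finset.sum_congr rfl fun t _ => ?_
          rw [Finset.mul_sum]
          refine Finset.sum_congr rfl fun i _ => ?_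
          rw [show w t i = c * w2 t i from congrFun (hwc t) i, abs_mul,
            Real.mul_rpow (abs_nonneg _) (abs_nonneg _)]
        have key := hMy T vseq σseq w2 h0 hpath
        rw [hcost, hin]
        calc |c| ^ p * (∑ t ∈ Finset.range T, ∑ i,
              |((C (σseq t)).mulVec (stSeq A B σseq w2 y t)
                + (D (σseq t)).mulVec (w2 t)) i| ^ p)
            - γ ^ p * (|c| ^ p * ∑ t ∈ Finset.range T, ∑ i, |w2 t i| ^ p)
            = |c| ^ p * ((∑ t ∈ Finset.range T, ∑ i,
              |((C (σseq t)).mulVec (stSeq A B σseq w2 y t)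
                + (D (σseq t)).mulVec (w2 t)) i| ^ p)
              - γ ^ p * ∑ t ∈ Finset.range T, ∑ i, |w2 t i| ^ p) := by ring
          _ ≤ |c| ^ p * My := mul_le_mul_of_nonneg_left key hcpos.le
  obtain ⟨M, hM⟩ := key
  refine lt_of_le_of_lt ?_ (EReal.coe_lt_top M)
  refine iSup_le fun T => iSup_le fun vseq => iSup_le fun σseq => iSup_le fun w =>
    iSup_le fun h0 => iSup_le fun hpath => ?_
  exact EReal.coe_le_coe_iff.mpr (hM T vseq σseq w h0 hpath)
end

section
/- Boundedness of the L_p-gain is undecidable: there is a reduction from the boundedness-of-matrix-products problem to the boundedness of the L_p-gain of a switching system. Concretely, given matrices A_1, A_2 ∈ ℝ^{n×n}, form the arbitrary (unconstrained) switching system on 3 modes with parameters (A_1,0,0,0), (A_2,0,0,0), (0,I,I,0) (state, input, output dimensions all n). Then the L_p-gain of this system is finite if and only if sup over all T and all words (σ(0),…,σ(T−1)) ∈ {1,2}^T of ‖A_{σ(T−1)} ⋯ A_{σ(0)}‖_p is finite. -/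
/-- Product `A_{σ(T-1)} ⋯ A_{σ(0)}` of matrices from the pair `{A₁, A₂}`. -/
def prodW {n : ℕ} (A1 A2 : Matrix (Fin n) (Fin n) ℝ) (σ : ℕ → Fin 2) :
    ℕ → Matrix (Fin n) (Fin n) ℝ
  | 0 => 1
  | T + 1 => ![A1, A2] (σ T) * prodW A1 A2 σ T

section Stmt16Aux

variable {n : ℕ}

lemma stSeq_zero {Λ : Type*} {d : ℕ} (A : Λ → Matrix (Fin n) (Fin n) ℝ)
    (B : Λ → Matrix (Fin n) (Fin d) ℝ) (σseq : ℕ → Λ) (w x0) :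
    stSeq A B σseq w x0 0 = x0 := rfl

lemma stSeq_succ {Λ : Type*} {d : ℕ} (A : Λ → Matrix (Fin n) (Fin n) ℝ)
    (B : Λ → Matrix (Fin n) (Fin d) ℝ) (σseq : ℕ → Λ) (w x0) (t : ℕ) :
    stSeq A B σseq w x0 (t + 1)
      = (A (σseq t)).mulVec (stSeq A B σseq w x0 t) + (B (σseq t)).mulVec (w t) := rfl

lemma prodW_zero (A1 A2 : Matrix (Fin n) (Fin n) ℝ) (σ : ℕ → Fin 2) :
    prodW A1 A2 σ 0 = 1 := rfl

lemma prodW_succ (A1 A2 : Matrix (Fin n) (Fin n) ℝ) (σ : ℕ → Fin 2) (T : ℕ) :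
    prodW A1 A2 σ (T + 1) = ![A1, A2] (σ T) * prodW A1 A2 σ T := rfl

lemma aux_Ane2 (A1 A2 : Matrix (Fin n) (Fin n) ℝ) {j : Fin 3} (hj : j ≠ 2) :
    (![A1, A2, 0] : Fin 3 → Matrix (Fin n) (Fin n) ℝ) j
      = ![A1, A2] ((![0, 1, 0] : Fin 3 → Fin 2) j) := by
  fin_cases j <;> simp_all

lemma aux_Bne2 {j : Fin 3} (hj : j ≠ 2) :
    (![0, 0, (1 : Matrix (Fin n) (Fin n) ℝ)]) j = 0 := by
  fin_cases j <;> simp_all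

lemma aux_B2 : (![0, 0, (1 : Matrix (Fin n) (Fin n) ℝ)]) 2 = 1 := rfl
lemma aux_A2 (A1 A2 : Matrix (Fin n) (Fin n) ℝ) :
    (![A1, A2, 0] : Fin 3 → Matrix (Fin n) (Fin n) ℝ) 2 = 0 := rfl

lemma prodW_congr (A1 A2 : Matrix (Fin n) (Fin n) ℝ) (σ σ' : ℕ → Fin 2) :
    ∀ T, (∀ u, u < T → σ u = σ' u) → prodW A1 A2 σ T = prodW A1 A2 σ' T
  | 0, _ => rfl
  | T + 1, h => by
      rw [prodW_succ, prodW_succ, h T (Nat.lt_succ_self T),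
        prodW_congr A1 A2 σ σ' T (fun u hu => h u (hu.trans (Nat.lt_succ_self T)))]

lemma state_zero (A1 A2 : Matrix (Fin n) (Fin n) ℝ) (σseq : ℕ → Fin 3)
    (w : ℕ → Fin n → ℝ) :
    ∀ t, (∀ u, u < t → σseq u ≠ 2) →
      stSeq ![A1, A2, 0] ![0, 0, (1 : Matrix (Fin n) (Fin n) ℝ)] σseq w 0 t = 0
  | 0, _ => rfl
  | t + 1, h => by
      rw [stSeq_succ, state_zero A1 A2 σseq w t
          (fun u hu => h u (hu.trans (Nat.lt_succ_self t))),
        aux_Bne2 (h t (Nat.lt_succ_self t))]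
      simp

lemma state_formula (A1 A2 : Matrix (Fin n) (Fin n) ℝ) (σseq : ℕ → Fin 3)
    (w : ℕ → Fin n → ℝ) (s : ℕ) (hs : σseq s = 2) :
    ∀ k, (∀ u, s < u → u < s + 1 + k → σseq u ≠ 2) →
      stSeq ![A1, A2, 0] ![0, 0, (1 : Matrix (Fin n) (Fin n) ℝ)] σseq w 0 (s + 1 + k)
        = (prodW A1 A2 (fun u => (![0, 1, 0] : Fin 3 → Fin 2) (σseq (s + 1 + u))) k).mulVec (w s)
  | 0, _ => by
      rw [show s + 1 + 0 = s + 1 from rfl, stSeq_succ, hs, aux_A2, aux_B2, prodW_zero]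
      simp
  | k + 1, h => by
      have hne : σseq (s + 1 + k) ≠ 2 := h (s + 1 + k) (by omega) (by omega)
      rw [show s + 1 + (k + 1) = (s + 1 + k) + 1 from rfl, stSeq_succ,
        state_formula A1 A2 σseq w s hs k (fun u h1 h2 => h u h1 (by omega)),
        aux_Bne2 hne, aux_Ane2 A1 A2 hne, prodW_succ]
      simp [Matrix.mulVec_mulVec]


end Stmt16Aux

/-- the reduction behind undecidability of gain boundedness.
For the 3-mode arbitrary switching system with parameters
`(A₁,0,0,0), (A₂,0,0,0), (0,I,I,0)`, the L_p-gain is finite if and only if all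
products of matrices from `{A₁, A₂}` are uniformly bounded. -/
theorem stmt16 {n : ℕ} (p : ℝ) (hp : 1 ≤ p) (A1 A2 : Matrix (Fin n) (Fin n) ℝ) :
    (∃ γ : ℝ, ∀ (σseq : ℕ → Fin 3) (w : ℕ → Fin n → ℝ),
        Summable (fun t => ∑ i, |w t i| ^ p) →
        ∑' t, (∑ i,
            |((![(0 : Matrix (Fin n) (Fin n) ℝ), 0, 1] (σseq t)).mulVec
                (stSeq ![A1, A2, 0] ![0, 0, (1 : Matrix (Fin n) (Fin n) ℝ)] σseq w 0 t)) i| ^ p)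
          ≤ γ * ∑' t, (∑ i, |w t i| ^ p))
    ↔ (∃ K : ℝ, ∀ (T : ℕ) (σ : ℕ → Fin 2) (x : Fin n → ℝ),
        ∑ i, |((prodW A1 A2 σ T).mulVec x) i| ^ p ≤ K * ∑ i, |x i| ^ p) := by
  constructor
  · rintro ⟨γ, hγ⟩
    refine ⟨γ, fun T σ x => ?_⟩
    have hp0 : p ≠ 0 := by linarith
    set e : Fin 2 → Fin 3 := ![0, 1] with he
    have he2 : ∀ j : Fin 2, e j ≠ 2 := by decide
    have hte : ∀ j : Fin 2, (![0, 1, 0] : Fin 3 → Fin 2) (e j) = j := by decide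
    set σs : ℕ → Fin 3 := fun t => if t = 0 then 2 else if t ≤ T then e (σ (t - 1)) else 2
      with hσs
    set wf : ℕ → Fin n → ℝ := fun t => if t = 0 then x else 0 with hwf
    have hσ0 : σs 0 = 2 := by simp [hσs]
    have hσmid : ∀ u, 1 ≤ u → u ≤ T → σs u = e (σ (u - 1)) := by
      intro u h1 h2
      rw [hσs]
      simp only [if_neg (by omega : ¬ u = 0), if_pos h2]
    have hσtail : ∀ u, T + 1 ≤ u → σs u = 2 := by
      intro u hu
      rw [hσs]
      simp only [if_neg (by omega : ¬ u = 0), if_neg (by omega : ¬ u ≤ T)]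
    have hw0 : ∀ t, t ≠ 0 → (∑ i, |wf t i| ^ p) = 0 := by
      intro t ht
      simp [hwf, ht, Real.zero_rpow hp0]
    have hsum : Summable (fun t => ∑ i, |wf t i| ^ p) :=
      summable_of_ne_finset_zero (s := {0}) (fun t ht => hw0 t (by simpa using ht))
    have htw : ∑' t, (∑ i, |wf t i| ^ p) = ∑ i, |x i| ^ p := by
      rw [tsum_eq_single 0 (fun t ht => hw0 t ht)]
      simp [hwf]
    -- state at time T+1
    have hXT : stSeq ![A1, A2, 0] ![0, 0, (1 : Matrix (Fin n) (Fin n) ℝ)] σs wf 0 (T + 1)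
        = (prodW A1 A2 σ T).mulVec x := by
      have hmain := state_formula A1 A2 σs wf 0 hσ0 T (fun u h1 h2 => by
        rw [hσmid u h1 (by omega)]
        exact he2 _)
      rw [show 0 + 1 + T = T + 1 by omega] at hmain
      rw [hmain, prodW_congr A1 A2 _ σ T (fun u hu => ?_)]
      · simp [hwf]
      · rw [hσmid (0 + 1 + u) (by omega) (by omega), show 0 + 1 + u - 1 = u by omega, hte]
    -- states after T+1 vanish
    have hXlate : ∀ t, T + 2 ≤ t →
        stSeq ![A1, A2, 0] ![0, 0, (1 : Matrix (Fin n) (Fin n) ℝ)] σs wf 0 t = 0 := by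
      intro t ht
      obtain ⟨u, rfl⟩ : ∃ u, t = u + 1 := ⟨t - 1, by omega⟩
      rw [stSeq_succ, hσtail u (by omega), aux_A2, aux_B2]
      have : wf u = 0 := by rw [hwf]; simp [show ¬ u = 0 by omega]
      simp [this]
    -- output terms vanish except at T+1
    have hzzero : ∀ t, t ≠ T + 1 →
        (∑ i, |((![(0 : Matrix (Fin n) (Fin n) ℝ), 0, 1] (σs t)).mulVec
            (stSeq ![A1, A2, 0] ![0, 0, (1 : Matrix (Fin n) (Fin n) ℝ)] σs wf 0 t)) i| ^ p)
          = 0 := by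
      intro t ht
      rcases Nat.lt_trichotomy t (T + 1) with hlt | heq | hgt
      · rcases Nat.eq_zero_or_pos t with rfl | hpos
        · rw [hσ0, aux_B2, stSeq_zero]
          simp [Real.zero_rpow hp0]
        · rw [hσmid t hpos (by omega), aux_Bne2 (he2 _)]
          simp [Real.zero_rpow hp0]
      · exact absurd heq ht
      · rw [hσtail t (by omega), aux_B2, hXlate t (by omega)]
        simp [Real.zero_rpow hp0]
    have hgain := hγ σs wf hsum
    rw [htw, tsum_eq_single (T + 1) hzzero, hσtail (T + 1) (by omega), aux_B2, hXT,
      Matrix.one_mulVec] at hgain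
    exact hgain
  · rintro ⟨K, hK⟩
    refine ⟨max K 0, fun σseq w hw => ?_⟩
    classical
    have hp0 : p ≠ 0 := by linarith
    set γ : ℝ := max K 0 with hγdef
    have hγ0 : 0 ≤ γ := le_max_right _ _
    set wp : ℕ → ℝ := fun t => ∑ i, |w t i| ^ p with hwp
    have hwnn : ∀ t, 0 ≤ wp t := fun t =>
      Finset.sum_nonneg fun i _ => Real.rpow_nonneg (abs_nonneg _) p
    set zp : ℕ → ℝ := fun t => ∑ i,
        |((![(0 : Matrix (Fin n) (Fin n) ℝ), 0, 1] (σseq t)).mulVec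
            (stSeq ![A1, A2, 0] ![0, 0, (1 : Matrix (Fin n) (Fin n) ℝ)] σseq w 0 t)) i| ^ p
      with hzp
    have hznn : ∀ t, 0 ≤ zp t := fun t =>
      Finset.sum_nonneg fun i _ => Real.rpow_nonneg (abs_nonneg _) p
    set P : ℕ → Prop := fun t => σseq t = 2 ∧ ∃ s, s < t ∧ σseq s = 2 with hP
    set g : ℕ → ℕ := fun t => Nat.findGreatest (fun s => σseq s = 2) (t - 1) with hg
    -- vanishing terms
    have hzero : ∀ t, ¬ P t → zp t = 0 := by
      intro t hnt
      by_cases h2 : σseq t = 2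
      · have hall : ∀ u, u < t → σseq u ≠ 2 := by
          intro u hu hu2
          exact hnt ⟨h2, u, hu, hu2⟩
        rw [hzp]
        simp only [h2, aux_B2, Matrix.one_mulVec, state_zero A1 A2 σseq w t hall]
        simp [Real.zero_rpow hp0]
      · rw [hzp]
        simp only [aux_Bne2 h2, Matrix.zero_mulVec]
        simp [Real.zero_rpow hp0]
    -- per-term bound
    have hbound : ∀ t, P t → zp t ≤ γ * wp (g t) := by
      rintro t ⟨h2, s0, hs0lt, hs02⟩
      have ht1 : 1 ≤ t := by omega
      have hsle : g t ≤ t - 1 := by rw [hg]; exact Nat.findGreatest_le _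
      have hs2 : σseq (g t) = 2 := by
        rw [hg]
        exact Nat.findGreatest_spec (P := fun s => σseq s = 2) (n := t - 1) (m := s0)
          (by omega) hs02
      have hmid : ∀ u, g t < u → u < t → σseq u ≠ 2 := by
        rw [hg]
        intro u h1 h2'
        exact Nat.findGreatest_is_greatest h1 (by omega)
      have hx := state_formula A1 A2 σseq w (g t) hs2 (t - g t - 1)
        (fun u h1 h2' => hmid u h1 (by omega))
      rw [show g t + 1 + (t - g t - 1) = t by omega] at hx
      rw [hzp]
      simp only [h2, aux_B2, Matrix.one_mulVec, hx]
      calc ∑ i, |((prodW A1 A2 _ (t - g t - 1)).mulVec (w (g t))) i| ^ p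
          ≤ K * ∑ i, |w (g t) i| ^ p := hK _ _ _
        _ ≤ γ * wp (g t) := mul_le_mul_of_nonneg_right (le_max_left _ _) (hwnn _)
    -- injectivity of g on P
    have hginj : ∀ t1, P t1 → ∀ t2, P t2 → g t1 = g t2 → t1 = t2 := by
      have key : ∀ t1 t2, P t1 → P t2 → t1 < t2 → g t1 < g t2 := by
        rintro t1 t2 ⟨h12, s1, hs1, _⟩ ⟨h22, _⟩ hlt
        have h1 : g t1 ≤ t1 - 1 := by rw [hg]; exact Nat.findGreatest_le _
        have h2 : t1 ≤ g t2 := by rw [hg]; exact Nat.le_findGreatest (by omega) h12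
        omega
      intro t1 h1 t2 h2 heq
      rcases Nat.lt_trichotomy t1 t2 with h | h | h
      · exact absurd heq (Nat.ne_of_lt (key t1 t2 h1 h2 h))
      · exact h
      · exact absurd heq.symm (Nat.ne_of_lt (key t2 t1 h2 h1 h))
    refine Real.tsum_le_of_sum_range_le hznn (fun N => ?_)
    set S : Finset ℕ := (Finset.range N).filter P with hS
    calc ∑ t ∈ Finset.range N, zp t
        = ∑ t ∈ S, zp t := by
          refine (Finset.sum_subset (Finset.filter_subset _ _) ?_).symm
          intro t htr hts
          exact hzero t (fun hPt => hts (Finset.mem_filter.mpr ⟨htr, hPt⟩))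
      _ ≤ ∑ t ∈ S, γ * wp (g t) :=
          Finset.sum_le_sum (fun t ht => hbound t (Finset.mem_filter.mp ht).2)
      _ = ∑ s ∈ S.image g, γ * wp s := by
          rw [Finset.sum_image (fun t1 h1 t2 h2 heq =>
            hginj t1 (Finset.mem_filter.mp h1).2 t2 (Finset.mem_filter.mp h2).2 heq)]
      _ = γ * ∑ s ∈ S.image g, wp s := by rw [Finset.mul_sum]
      _ ≤ γ * ∑' s, wp s :=
          mul_le_mul_of_nonneg_left (Summable.sum_le_tsum _ (fun s _ => hwnn s) hw) hγ0
end

section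
/- Quadratic converse storage function via John's ellipsoid: let (|·|_v)_{v∈V} be norms on ℝⁿ satisfying, for every edge (u,v,σ), x, w: |√n A_σ x + √n B_σ w|_v² + ‖C_σ x + D_σ w‖_2² ≤ |x|_u² + ‖w‖_2². Then there exist positive definite quadratic norms |x|_{Q,v} = (xᵀ Q_v x)^{1/2} such that for every edge (u,v,σ), x, w: |A_σ x + B_σ w|_{Q,v}² + ‖C_σ x + D_σ w‖_2² ≤ |x|_{Q,u}² + ‖w‖_2². -/
open Matrix

attribute [local instance] Matrix.normedAddCommGroup Matrix.normedSpace

set_option maxHeartbeats 1000000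

namespace Stmt17Aux

variable {n : ℕ}

private lemma quad_smul (Q : Matrix (Fin n) (Fin n) ℝ) (c : ℝ) (x : Fin n → ℝ) :
    x ⬝ᵥ (c • Q) *ᵥ x = c * (x ⬝ᵥ Q *ᵥ x) := by
  rw [Matrix.smul_mulVec, dotProduct_smul, smul_eq_mul]

private lemma quad_add (Q R : Matrix (Fin n) (Fin n) ℝ) (x : Fin n → ℝ) :
    x ⬝ᵥ (Q + R) *ᵥ x = x ⬝ᵥ Q *ᵥ x + x ⬝ᵥ R *ᵥ x := by
  rw [Matrix.add_mulVec, dotProduct_add]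

private lemma quad_vecMulVec (c x : Fin n → ℝ) :
    x ⬝ᵥ (vecMulVec c c) *ᵥ x = (c ⬝ᵥ x) ^ 2 := by
  calc x ⬝ᵥ (vecMulVec c c) *ᵥ x = ∑ i, ∑ j, x i * (c i * c j * x j) := by
        simp [dotProduct, mulVec, vecMulVec_apply, Finset.mul_sum]
    _ = (∑ i, c i * x i) * (∑ j, c j * x j) := by
        rw [Finset.sum_mul_sum]
        exact Finset.sum_congr rfl fun i _ => Finset.sum_congr rfl fun j _ => by ring
    _ = (c ⬝ᵥ x) ^ 2 := by rw [sq]; rfl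

private lemma vmv_symm (c : Fin n → ℝ) : (vecMulVec c c)ᵀ = vecMulVec c c := by
  ext i j
  simp [vecMulVec_apply, Matrix.transpose_apply, mul_comm]

private lemma sym_bilin {M : Matrix (Fin n) (Fin n) ℝ} (hM : Mᵀ = M) (u v : Fin n → ℝ) :
    u ⬝ᵥ M *ᵥ v = v ⬝ᵥ M *ᵥ u := by
  rw [dotProduct_mulVec, ← hM, vecMul_transpose, dotProduct_comm, hM]

private lemma continuous_quad (x : Fin n → ℝ) :
    Continuous fun Q : Matrix (Fin n) (Fin n) ℝ => x ⬝ᵥ Q *ᵥ x := by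
  unfold dotProduct mulVec
  exact continuous_finset_sum _ fun i _ => (continuous_const.mul (continuous_finset_sum _
    fun j _ => (Continuous.matrix_elem continuous_id i j).mul continuous_const))

/-- John's ellipsoid: a quadratic form sandwiched between `N²/n` and `N²`. -/
theorem john (N : Seminorm ℝ (Fin n → ℝ)) (hdef : ∀ x, N x = 0 → x = 0) :
    ∃ Q : Matrix (Fin n) (Fin n) ℝ, Q.PosDef ∧
      (∀ x, x ⬝ᵥ Q *ᵥ x ≤ (N x) ^ 2) ∧
      (∀ x, (N x) ^ 2 ≤ (n : ℝ) * (x ⬝ᵥ Q *ᵥ x)) := by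
  rcases Nat.eq_zero_or_pos n with hn | hn
  · subst hn
    refine ⟨1, Matrix.PosDef.one, fun x => ?_, fun x => ?_⟩
    · have : x ⬝ᵥ (1 : Matrix (Fin 0) (Fin 0) ℝ) *ᵥ x = 0 := by simp [dotProduct]
      rw [this]; positivity
    · have hx : x = 0 := Subsingleton.elim _ _
      rw [hx, map_zero]
      simp
  -- basis vectors
  set e : Fin n → (Fin n → ℝ) := fun i j => if i = j then (1 : ℝ) else 0 with he
  have hsum_le : ∀ (s : Finset (Fin n)) (f : Fin n → (Fin n → ℝ)),
      N (∑ i ∈ s, f i) ≤ ∑ i ∈ s, N (f i) := by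
    intro s f
    induction s using Finset.induction_on with
    | empty => simp
    | insert _ _ h ih =>
      rw [Finset.sum_insert h, Finset.sum_insert h]
      exact (map_add_le_add N _ _).trans (by linarith)
  -- continuity of N
  have hNle : ∀ x : Fin n → ℝ, N x ≤ (∑ i, N (e i)) * ‖x‖ := by
    intro x
    calc N x = N (∑ i, x i • e i) := by rw [← pi_eq_sum_univ x]
      _ ≤ ∑ i, N (x i • e i) := hsum_le _ _
      _ ≤ ∑ i, ‖x‖ * N (e i) := by
          refine Finset.sum_le_sum fun i _ => ?_
          rw [map_smul_eq_mul]
          exact mul_le_mul_of_nonneg_right ((Real.norm_eq_abs _ ▸ norm_le_pi_norm x i))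
            (apply_nonneg _ _)
      _ = (∑ i, N (e i)) * ‖x‖ := by
          rw [Finset.sum_mul]
          exact Finset.sum_congr rfl fun i _ => mul_comm _ _
  have hNcont : Continuous fun x : Fin n → ℝ => N x := by
    have hlip : LipschitzWith (Real.toNNReal (∑ i, N (e i))) fun x : Fin n → ℝ => N x := by
      apply LipschitzWith.of_dist_le_mul
      intro x y
      rw [Real.dist_eq, dist_eq_norm]
      refine (abs_sub_map_le_sub N x y).trans ((hNle _).trans ?_)
      rw [Real.coe_toNNReal']
      exact mul_le_mul_of_nonneg_right (le_max_left _ _) (norm_nonneg _)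
    exact hlip.continuous
  -- lower bound
  obtain ⟨μ, hμpos, hμ⟩ : ∃ μ > (0:ℝ), ∀ x : Fin n → ℝ, μ * ‖x‖ ≤ N x := by
    haveI : Nonempty (Fin n) := ⟨⟨0, hn⟩⟩
    have hne : (Metric.sphere (0 : Fin n → ℝ) 1).Nonempty := by
      apply NormedSpace.sphere_nonempty.mpr; norm_num
    obtain ⟨z, hz, hzmin⟩ := (isCompact_sphere (0 : Fin n → ℝ) 1).exists_isMinOn hne
      hNcont.continuousOn
    have hz1 : ‖z‖ = 1 := by simpa using hz
    have hzpos : 0 < N z := by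
      rcases (apply_nonneg N z).lt_or_eq with h | h
      · exact h
      · exfalso; have := hdef z h.symm; rw [this] at hz1; simp at hz1
    refine ⟨N z, hzpos, fun x => ?_⟩
    rcases eq_or_ne x 0 with rfl | hx
    · simp
    · have hc : (0:ℝ) < ‖x‖ := norm_pos_iff.mpr hx
      have hu : (‖x‖⁻¹ • x) ∈ Metric.sphere (0 : Fin n → ℝ) 1 := by
        simp [norm_smul, abs_of_nonneg (norm_nonneg x), inv_mul_cancel₀ hc.ne']
      have h1 : N z ≤ N (‖x‖⁻¹ • x) := isMinOn_iff.mp hzmin _ hu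
      rw [map_smul_eq_mul, Real.norm_eq_abs, abs_inv, abs_of_nonneg (norm_nonneg x)] at h1
      rw [mul_comm]
      calc ‖x‖ * N z ≤ ‖x‖ * (‖x‖⁻¹ * N x) := mul_le_mul_of_nonneg_left h1 (norm_nonneg x)
        _ = N x := by field_simp
  -- the constraint set
  set S : Set (Matrix (Fin n) (Fin n) ℝ) :=
    {Q | Qᵀ = Q ∧ (∀ x, 0 ≤ x ⬝ᵥ Q *ᵥ x) ∧ ∀ x, x ⬝ᵥ Q *ᵥ x ≤ (N x) ^ 2} with hS
  have hSclosed : IsClosed S := by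
    rw [hS]
    have h1 : IsClosed {Q : Matrix (Fin n) (Fin n) ℝ | Qᵀ = Q} :=
      isClosed_eq (Continuous.matrix_transpose continuous_id) continuous_id
    have h2 : IsClosed {Q : Matrix (Fin n) (Fin n) ℝ | ∀ x, 0 ≤ x ⬝ᵥ Q *ᵥ x} := by
      rw [Set.setOf_forall]
      exact isClosed_iInter fun x => isClosed_le continuous_const (continuous_quad x)
    have h3 : IsClosed {Q : Matrix (Fin n) (Fin n) ℝ | ∀ x, x ⬝ᵥ Q *ᵥ x ≤ (N x) ^ 2} := by
      rw [Set.setOf_forall]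
      exact isClosed_iInter fun x => isClosed_le (continuous_quad x) continuous_const
    exact h1.inter (h2.inter h3)
  have hq_ee : ∀ (Q : Matrix (Fin n) (Fin n) ℝ) (i j : Fin n),
      (e i) ⬝ᵥ Q *ᵥ (e j) = Q i j := by
    intro Q i j
    simp [he, dotProduct, mulVec, Finset.mul_sum]
  -- boundedness
  set R : ℝ := ∑ i, ∑ j, ((N (e i + e j)) ^ 2 + (N (e i)) ^ 2 + (N (e j)) ^ 2) with hR
  have hRnn : ∀ i j : Fin n, (0:ℝ) ≤ (N (e i + e j)) ^ 2 + (N (e i)) ^ 2 + (N (e j)) ^ 2 :=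
    fun i j => by positivity
  have hSsub : S ⊆ Metric.closedBall 0 R := by
    intro Q hQ
    obtain ⟨hsym, hpos, hle⟩ := hQ
    have hsym' : ∀ i j, Q j i = Q i j := fun i j => by
      have h := congrFun (congrFun hsym j) i
      simpa [Matrix.transpose_apply] using h.symm
    have key : ∀ i j, |Q i j| ≤ (N (e i + e j)) ^ 2 + (N (e i)) ^ 2 + (N (e j)) ^ 2 := by
      intro i j
      have h1 : (e i + e j) ⬝ᵥ Q *ᵥ (e i + e j) = Q i i + Q i j + Q j i + Q j j := by
        rw [add_dotProduct, Matrix.mulVec_add, dotProduct_add, dotProduct_add,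
          hq_ee, hq_ee, hq_ee, hq_ee]
        ring
      have h2 := hpos (e i + e j)
      have h3 := hle (e i + e j)
      have h4 := hpos (e i); have h5 := hle (e i)
      have h6 := hpos (e j); have h7 := hle (e j)
      rw [h1] at h2 h3
      rw [hq_ee] at h4 h5 h6 h7
      rw [hsym' i j] at h2 h3
      rw [abs_le]
      constructor <;> nlinarith
    rw [Metric.mem_closedBall, dist_zero_right]
    refine (pi_norm_le_iff_of_nonneg ?_).mpr fun i => ?_
    · exact Finset.sum_nonneg fun i _ => Finset.sum_nonneg fun j _ => hRnn i j
    refine (pi_norm_le_iff_of_nonneg ?_).mpr fun j => ?_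
    · exact Finset.sum_nonneg fun i _ => Finset.sum_nonneg fun j _ => hRnn i j
    rw [Real.norm_eq_abs]
    calc |Q i j| ≤ (N (e i + e j)) ^ 2 + (N (e i)) ^ 2 + (N (e j)) ^ 2 := key i j
      _ ≤ ∑ j, ((N (e i + e j)) ^ 2 + (N (e i)) ^ 2 + (N (e j)) ^ 2) :=
          Finset.single_le_sum (fun k _ => hRnn i k) (Finset.mem_univ j)
      _ ≤ R := Finset.single_le_sum (f := fun i =>
          ∑ j, ((N (e i + e j)) ^ 2 + (N (e i)) ^ 2 + (N (e j)) ^ 2))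
          (fun k _ => Finset.sum_nonneg fun j _ => hRnn k j) (Finset.mem_univ i)
  have hScompact : IsCompact S :=
    (isCompact_closedBall (0 : Matrix (Fin n) (Fin n) ℝ) R).of_isClosed_subset hSclosed hSsub
  -- nonemptiness
  set ε : ℝ := μ ^ 2 / n with hε
  have hnpos : (0:ℝ) < n := by exact_mod_cast hn
  have hεpos : 0 < ε := div_pos (by positivity) hnpos
  have hQ₀mem : (ε • 1 : Matrix (Fin n) (Fin n) ℝ) ∈ S := by
    refine ⟨by simp [Matrix.transpose_smul], fun x => ?_, fun x => ?_⟩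
    · rw [quad_smul]
      have h0 : x ⬝ᵥ (1 : Matrix (Fin n) (Fin n) ℝ) *ᵥ x = ∑ i, (x i) ^ 2 := by
        simp [dotProduct, sq]
      rw [h0]; positivity
    · rw [quad_smul]
      have h1 : x ⬝ᵥ (1 : Matrix (Fin n) (Fin n) ℝ) *ᵥ x = ∑ i, (x i) ^ 2 := by
        simp [dotProduct, sq]
      have h2 : ∑ i, (x i) ^ 2 ≤ (n:ℝ) * ‖x‖ ^ 2 := by
        calc ∑ i, (x i) ^ 2 ≤ ∑ _i : Fin n, ‖x‖ ^ 2 := by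
              refine Finset.sum_le_sum fun i _ => ?_
              have hx := norm_le_pi_norm x i
              rw [Real.norm_eq_abs] at hx
              nlinarith [abs_nonneg (x i), norm_nonneg x, le_abs_self (x i), neg_abs_le (x i)]
          _ = (n:ℝ) * ‖x‖ ^ 2 := by simp [Finset.sum_const]
      have h4 : μ ^ 2 * ‖x‖ ^ 2 ≤ (N x) ^ 2 := by
        nlinarith [hμ x, mul_nonneg hμpos.le (norm_nonneg x),
          mul_self_le_mul_self (mul_nonneg hμpos.le (norm_nonneg x)) (hμ x)]
      rw [h1, hε]
      rw [div_mul_eq_mul_div, div_le_iff₀ hnpos]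
      nlinarith
  -- the determinant is continuous
  have hdetcont : Continuous fun Q : Matrix (Fin n) (Fin n) ℝ => Q.det := by
    simp only [Matrix.det_apply']
    exact continuous_finset_sum _ fun σ _ => continuous_const.mul
      (continuous_finset_prod _ fun i _ => (continuous_apply i).comp (continuous_apply (σ i)))
  -- maximize det
  obtain ⟨Q, hQS, hQmax⟩ := hScompact.exists_isMaxOn ⟨_, hQ₀mem⟩ hdetcont.continuousOn
  obtain ⟨hsym, hpos, hle⟩ := hQS
  have hdet0 : (0:ℝ) < (ε • (1 : Matrix (Fin n) (Fin n) ℝ)).det := by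
    rw [Matrix.det_smul, Matrix.det_one, Fintype.card_fin, mul_one]
    positivity
  have hdetQ : 0 < Q.det := lt_of_lt_of_le hdet0 (isMaxOn_iff.mp hQmax _ hQ₀mem)
  have hherm : Q.IsHermitian := by
    rw [Matrix.IsHermitian, Matrix.conjTranspose]
    ext i j; simpa using congrFun (congrFun hsym i) j
  have hQpd : Q.PosDef := by
    refine posDef_iff_dotProduct_mulVec.mpr ⟨hherm, fun x hx => ?_⟩
    rw [star_trivial]
    rcases (hpos x).lt_or_eq with h | h
    · exact h
    · exfalso
      have hpsd : Q.PosSemidef := posSemidef_iff_dotProduct_mulVec.mpr ⟨hherm, fun y => by rw [star_trivial]; exact hpos y⟩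
      have hz : Q *ᵥ x = 0 :=
        (hpsd.dotProduct_mulVec_zero_iff x).mp (by rw [star_trivial]; exact h.symm)
      have hd : Q.det = 0 := Matrix.exists_mulVec_eq_zero_iff.mp ⟨x, hx, hz⟩
      rw [hd] at hdetQ; exact lt_irrefl _ hdetQ
  refine ⟨Q, hQpd, hle, ?_⟩
  -- key optimality claim
  by_contra hcon
  push_neg at hcon
  obtain ⟨x₀, hx₀⟩ := hcon
  have hx₀ne : x₀ ≠ 0 := by
    rintro rfl
    rw [map_zero] at hx₀
    have h0 : (0:Fin n → ℝ) ⬝ᵥ Q *ᵥ 0 = 0 := by simp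
    rw [h0] at hx₀
    simp at hx₀
  have hq₀pos : 0 < x₀ ⬝ᵥ Q *ᵥ x₀ := by
    have := (posDef_iff_dotProduct_mulVec.mp hQpd).2 hx₀ne; rwa [star_trivial] at this
  have hNx₀pos : 0 < N x₀ := by
    rcases (apply_nonneg N x₀).lt_or_eq with h | h
    · exact h
    · exact absurd (hdef x₀ h.symm) hx₀ne
  -- Hahn-Banach
  obtain ⟨c, hc_le, hc_eq⟩ : ∃ c : Fin n → ℝ, (∀ x, c ⬝ᵥ x ≤ N x) ∧ c ⬝ᵥ x₀ = N x₀ := by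
    set f : (Fin n → ℝ) →ₗ.[ℝ] ℝ := LinearPMap.mkSpanSingleton x₀ (N x₀) hx₀ne with hf
    have hfle : ∀ z : f.domain, f z ≤ N z := by
      rintro ⟨z, hz⟩
      rcases Submodule.mem_span_singleton.1 hz with ⟨t, rfl⟩
      have happ : f ⟨t • x₀, hz⟩ = t • (N x₀) := LinearPMap.mkSpanSingleton'_apply _ _ _ t _
      rw [happ]
      calc t • N x₀ = t * N x₀ := rfl
        _ ≤ |t| * N x₀ := mul_le_mul_of_nonneg_right (le_abs_self t) (apply_nonneg _ _)
        _ = N (t • x₀) := by rw [map_smul_eq_mul N t x₀, Real.norm_eq_abs]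
    obtain ⟨g, hg1, hg2⟩ := exists_extension_of_le_sublinear f (fun x => N x)
      (fun r hr x => by
        show N (r • x) = r * N x
        rw [map_smul_eq_mul N r x, Real.norm_eq_abs, abs_of_pos hr])
      (fun x y => map_add_le_add N x y) hfle
    have hgc : ∀ x : Fin n → ℝ, g x = (fun i => g (e i)) ⬝ᵥ x := by
      intro x
      calc g x = g (∑ i, x i • e i) := by rw [← pi_eq_sum_univ x]
        _ = ∑ i, x i * g (e i) := by
            rw [map_sum]
            exact Finset.sum_congr rfl fun i _ => by rw [LinearMap.map_smul, smul_eq_mul]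
        _ = (fun i => g (e i)) ⬝ᵥ x := by
            rw [dotProduct]
            exact Finset.sum_congr rfl fun i _ => mul_comm _ _
    refine ⟨fun i => g (e i), fun x => ?_, ?_⟩
    · rw [← hgc]; exact hg2 x
    · have hmem : x₀ ∈ f.domain := Submodule.mem_span_singleton_self x₀
      have h1 := hg1 ⟨x₀, hmem⟩
      rw [hgc] at h1
      rw [h1]
      exact LinearPMap.mkSpanSingleton_apply ℝ ℝ hx₀ne (N x₀)
  have habs : ∀ x, |c ⬝ᵥ x| ≤ N x := by
    intro x
    rw [abs_le]
    refine ⟨?_, hc_le x⟩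
    have h1 := hc_le (-x)
    rw [dotProduct_neg, map_neg_eq_map] at h1
    linarith
  -- Cauchy-Schwarz
  have hdetunit : IsUnit Q.det := isUnit_iff_ne_zero.mpr hdetQ.ne'
  set s : ℝ := c ⬝ᵥ Q⁻¹ *ᵥ c with hs
  have hQinv : Q⁻¹.PosDef := hQpd.inv
  have hQinvsym : Q⁻¹ᵀ = Q⁻¹ := by rw [Matrix.transpose_nonsing_inv, hsym]
  have hCS : (N x₀) ^ 2 ≤ s * (x₀ ⬝ᵥ Q *ᵥ x₀) := by
    set q₀ : ℝ := x₀ ⬝ᵥ Q *ᵥ x₀ with hq₀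
    set w : Fin n → ℝ := Q *ᵥ x₀ with hw
    have h1 : Q⁻¹ *ᵥ w = x₀ := by
      rw [hw, Matrix.mulVec_mulVec, Matrix.nonsing_inv_mul Q hdetunit, Matrix.one_mulVec]
    have h2 : w ⬝ᵥ Q⁻¹ *ᵥ c = N x₀ := by rw [sym_bilin hQinvsym, h1, hc_eq]
    have h3 : w ⬝ᵥ x₀ = q₀ := dotProduct_comm w x₀
    have hquadpos := (posSemidef_iff_dotProduct_mulVec.mp hQinv.posSemidef).2 (q₀ • c - (N x₀) • w)
    rw [star_trivial] at hquadpos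
    have hexp : (q₀ • c - (N x₀) • w) ⬝ᵥ Q⁻¹ *ᵥ (q₀ • c - (N x₀) • w)
        = q₀ * q₀ * s - q₀ * (N x₀) ^ 2 := by
      rw [Matrix.mulVec_sub, Matrix.mulVec_smul, Matrix.mulVec_smul, h1]
      simp only [sub_dotProduct, dotProduct_sub, smul_dotProduct, dotProduct_smul, smul_eq_mul]
      rw [← hs, h3, hc_eq, h2]
      ring
    rw [hexp] at hquadpos
    have hkey : 0 ≤ q₀ * s - (N x₀)^2 := by
      have h9 : 0 ≤ q₀ * (q₀ * s - (N x₀)^2) := by nlinarith [hquadpos]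
      nlinarith [hq₀pos, h9, mul_pos hq₀pos hq₀pos]
    linarith [hkey, mul_comm s q₀]
  have hsgt : (n : ℝ) < s := by nlinarith [hx₀, hq₀pos, hCS]
  -- perturbation
  obtain ⟨k, hk⟩ : ∃ k, n = k + 1 := ⟨n - 1, (Nat.succ_pred_eq_of_pos hn).symm⟩
  have hkcast : (n:ℝ) = (k:ℝ) + 1 := by rw [hk]; push_cast; ring
  set t : ℝ := (s - n) / ((k:ℝ) * (s - 1) + (s - n) + 1) with ht
  have hs1 : (1:ℝ) ≤ (n:ℝ) := by exact_mod_cast hn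
  have hsm1 : (0:ℝ) < s - 1 := by linarith
  have hsn : (0:ℝ) < s - n := by linarith
  have hD : (0:ℝ) < (k:ℝ) * (s - 1) + (s - n) + 1 := by positivity
  have ht0 : 0 < t := div_pos hsn hD
  have ht1 : t < 1 := by
    rw [ht, div_lt_one hD]
    have : (0:ℝ) ≤ (k:ℝ) * (s-1) := by positivity
    linarith
  have h1t : (0:ℝ) < 1 - t := by linarith
  have htD : t * ((k:ℝ)*(s-1) + (s-n) + 1) = s - n := div_mul_cancel₀ _ hD.ne'
  have hkts : (k:ℝ) * t * (s - 1) < s - n := by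
    have hkD : (k:ℝ) * (s-1) < (k:ℝ)*(s-1) + (s-n) + 1 := by linarith
    calc (k:ℝ) * t * (s-1) = t * ((k:ℝ)*(s-1)) := by ring
      _ < t * ((k:ℝ)*(s-1) + (s-n) + 1) := by nlinarith
      _ = s - n := htD
  set Q' : Matrix (Fin n) (Fin n) ℝ := (1-t) • Q + t • vecMulVec c c with hQ'
  have hQ'mem : Q' ∈ S := by
    refine ⟨?_, fun x => ?_, fun x => ?_⟩
    · rw [hQ', Matrix.transpose_add, Matrix.transpose_smul, Matrix.transpose_smul, hsym,
        vmv_symm]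
    · rw [hQ', quad_add, quad_smul, quad_smul, quad_vecMulVec]
      nlinarith [hpos x, sq_nonneg (c ⬝ᵥ x), ht0, h1t]
    · rw [hQ', quad_add, quad_smul, quad_smul, quad_vecMulVec]
      have h2 : (c ⬝ᵥ x)^2 ≤ (N x)^2 := by
        nlinarith [sq_abs (c ⬝ᵥ x), abs_nonneg (c ⬝ᵥ x), habs x, apply_nonneg N x]
      nlinarith [hle x, ht0, h1t]
  have hsmul_vmv : vecMulVec ((t/(1-t)) • c) c = (t/(1-t)) • vecMulVec c c := by
    ext i j
    simp [vecMulVec_apply]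
    ring
  have hfac : Q' = (1-t) • (Q + vecMulVec ((t/(1-t)) • c) c) := by
    rw [hsmul_vmv, smul_add, smul_smul, hQ']
    congr 2
    field_simp
  have hdetQ' : Q'.det = (1-t)^n * (Q.det * (1 + (t/(1-t)) * s)) := by
    rw [hfac, Matrix.det_smul, Fintype.card_fin, vecMulVec_eq Unit,
      Matrix.det_add_replicateCol_mul_replicateRow hdetunit]
    have hentry : (1 + replicateRow Unit c * Q⁻¹ * replicateCol Unit ((t/(1-t)) • c)).det
        = 1 + (t/(1-t)) * s := by
      rw [Matrix.det_unique, Matrix.add_apply, Matrix.one_apply_eq]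
      congr 1
      rw [Matrix.mul_assoc, ← Matrix.replicateCol_mulVec, Matrix.replicateRow_mul_replicateCol_apply,
        Matrix.mulVec_smul, dotProduct_smul, smul_eq_mul]
    rw [hentry]
  have hgoal : Q.det < Q'.det := by
    rw [hdetQ']
    have hpn : ((1:ℝ)-t)^n = (1-t)^(k+1) := by rw [hk]
    rw [hpn]
    have hpow : (1 - (k:ℝ)*t) ≤ (1-t)^k := by
      have hb := one_add_mul_le_pow (a := -t) (by linarith) k
      have he1 : (1:ℝ) + (k:ℝ)*(-t) = 1 - (k:ℝ)*t := by ring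
      have he2 : ((1:ℝ) + -t) = 1 - t := by ring
      rw [he1, he2] at hb
      exact hb
    have e1 : (1-t) * (1 + t/(1-t) * s) = (1-t) + t*s := by
      field_simp
    have hfact : (1-t)^(k+1) * (Q.det * (1 + t/(1-t) * s))
        = Q.det * ((1-t)^k * ((1-t) + t*s)) := by
      rw [pow_succ]
      calc (1-t)^k * (1-t) * (Q.det * (1 + t/(1-t)*s))
          = Q.det * ((1-t)^k * ((1-t) * (1 + t/(1-t)*s))) := by ring
        _ = Q.det * ((1-t)^k * ((1-t) + t*s)) := by rw [e1]
    rw [hfact]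
    have h3 : (0:ℝ) < (1-t) + t*s := by nlinarith
    have h4 : (1 - (k:ℝ)*t) * ((1-t) + t*s) ≤ (1-t)^k * ((1-t)+t*s) :=
      mul_le_mul_of_nonneg_right hpow h3.le
    have h5 : 1 < (1 - (k:ℝ)*t) * ((1-t) + t*s) := by
      nlinarith [mul_pos ht0 (sub_pos.mpr hkts), hkcast]
    nlinarith [hdetQ]
  exact absurd (isMaxOn_iff.mp hQmax _ hQ'mem) (not_le.mpr hgoal)

end Stmt17Aux

/-- converse quadratic storage functions via John's ellipsoids.
If a multinorm storage function exists for the system scaled by `√n`, then a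
quadratic multinorm storage function exists for the original system. -/
theorem stmt17 {V Λ : Type*} {n d m : ℕ} (E : Set (V × V × Λ))
    (A : Λ → Matrix (Fin n) (Fin n) ℝ) (B : Λ → Matrix (Fin n) (Fin d) ℝ)
    (C : Λ → Matrix (Fin m) (Fin n) ℝ) (D : Λ → Matrix (Fin m) (Fin d) ℝ)
    (N : V → Seminorm ℝ (Fin n → ℝ))
    (hdef : ∀ (v : V) (x : Fin n → ℝ), N v x = 0 → x = 0)
    (hdiss : ∀ u v σ, (u, v, σ) ∈ E → ∀ (x : Fin n → ℝ) (w : Fin d → ℝ),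
      (N v (Real.sqrt n • ((A σ).mulVec x) + Real.sqrt n • ((B σ).mulVec w))) ^ 2
          + ∑ i, (((C σ).mulVec x + (D σ).mulVec w) i) ^ 2
        ≤ (N u x) ^ 2 + ∑ i, (w i) ^ 2) :
    ∃ Q : V → Matrix (Fin n) (Fin n) ℝ,
      (∀ v, (Q v).PosDef) ∧
      ∀ u v σ, (u, v, σ) ∈ E → ∀ (x : Fin n → ℝ) (w : Fin d → ℝ),
        ((A σ).mulVec x + (B σ).mulVec w) ⬝ᵥ
            (Q v).mulVec ((A σ).mulVec x + (B σ).mulVec w)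
            + ∑ i, (((C σ).mulVec x + (D σ).mulVec w) i) ^ 2
          ≤ x ⬝ᵥ (Q u).mulVec x + ∑ i, (w i) ^ 2 := by
  have h := fun v => Stmt17Aux.john (N v) (hdef v)
  choose Q0 hpd hub hlb using h
  refine ⟨fun v => (n : ℝ) • Q0 v, fun v => ?_, ?_⟩
  · rcases Nat.eq_zero_or_pos n with hn | hn
    · subst hn
      refine ⟨?_, fun x hx => absurd (Subsingleton.elim x 0) hx⟩
      ext i j
      exact i.elim0
    · have hnpos : (0:ℝ) < n := by exact_mod_cast hn
      refine posDef_iff_dotProduct_mulVec.mpr ⟨?_, fun x hx => ?_⟩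
      · have hh := (hpd v).1
        rw [Matrix.IsHermitian] at hh ⊢
        rw [Matrix.conjTranspose_smul, hh, star_trivial]
      · rw [star_trivial, Stmt17Aux.quad_smul]
        have h2 := (posDef_iff_dotProduct_mulVec.mp (hpd v)).2 hx
        rw [star_trivial] at h2
        exact mul_pos hnpos h2
  · intro u v σ hE x w
    have hd := hdiss u v σ hE x w
    set z := (A σ).mulVec x + (B σ).mulVec w with hz
    have hsmul : Real.sqrt n • ((A σ).mulVec x) + Real.sqrt n • ((B σ).mulVec w)
        = Real.sqrt n • z := (smul_add _ _ _).symm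
    rw [hsmul] at hd
    have hNsq : (N v (Real.sqrt n • z)) ^ 2 = (n:ℝ) * (N v z) ^ 2 := by
      rw [map_smul_eq_mul, Real.norm_eq_abs, abs_of_nonneg (Real.sqrt_nonneg _), mul_pow,
        Real.sq_sqrt (by positivity : (0:ℝ) ≤ (n:ℝ))]
    rw [hNsq] at hd
    have h1 : z ⬝ᵥ ((n:ℝ) • Q0 v) *ᵥ z = (n:ℝ) * (z ⬝ᵥ (Q0 v) *ᵥ z) :=
      Stmt17Aux.quad_smul _ _ _
    have h2 : x ⬝ᵥ ((n:ℝ) • Q0 u) *ᵥ x = (n:ℝ) * (x ⬝ᵥ (Q0 u) *ᵥ x) :=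
      Stmt17Aux.quad_smul _ _ _
    show z ⬝ᵥ ((n:ℝ) • Q0 v) *ᵥ z + _ ≤ x ⬝ᵥ ((n:ℝ) • Q0 u) *ᵥ x + _
    rw [h1, h2]
    have h3 : (n:ℝ) * (z ⬝ᵥ (Q0 v) *ᵥ z) ≤ (n:ℝ) * (N v z) ^ 2 :=
      mul_le_mul_of_nonneg_left (hub v z) (Nat.cast_nonneg n)
    have h4 : (N u x) ^ 2 ≤ (n:ℝ) * (x ⬝ᵥ (Q0 u) *ᵥ x) := hlb u x
    linarith
end
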